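/- Let k be a positive integer and let H and G be simple graphs such that G is not k-colourable and there is no graph homomorphism from H to G. Let m = |G| and let n ≥ m. Then the balanced blow-up G′ of G on n vertices is H-free, has minimum degree at least δ(G)·⌊n/m⌋ where δ(G) is the minimum degree of G, and any spanning subgraph of G′ obtained by deleting fewer than ⌊n/m⌋² edges is not k-colourable. -/

import Mathlib

open SimpleGraph

/-- `H` has a copy in `G`: an injective graph homomorphism from `H` to `G`,
i.e. `G` contains a subgraph isomorphic to `H`. -/
def Copies {α β : Type*} (H : SimpleGraph α) (G : SimpleGraph β) : Prop :=
  ∃ f : H →g G, Function.Injective f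

/-- The blow-up of a graph `F` in which each vertex `v` is replaced by an
independent set of size `s v`, and each edge by a complete bipartite graph. -/
def Blowup {α : Type*} (F : SimpleGraph α) (s : α → ℕ) :
    SimpleGraph (Σ v : α, Fin (s v)) where
  Adj x y := F.Adj x.1 y.1
  symm := ⟨fun _ _ h => F.symm.symm _ _ h⟩
  loopless := ⟨fun x h => F.loopless.irrefl x.1 h⟩


/-!
A copy of `H` in the blow-up would project to a homomorphism `H →g G`, and a vertex of the
blow-up over `v` is adjacent to all of `I_u` for each neighbour `u` of `v`, where
`|I_u| ≥ ⌊n/m⌋` by balance. For the deletion bound, call a choice of one vertex from each part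
a section: every section spans a homomorphic image of `G`, so if `G''` is `k`-colourable each
section contains a deleted edge. An edge between two parts `I_u, I_v` lies on a
`1/(|I_u||I_v|) ≤ 1/⌊n/m⌋²` fraction of all sections, so at least `⌊n/m⌋²` edges are deleted.
-/

open Finset

lemma sum_div_card_le_of_balanced {β : Type*} [Fintype β] {s : β → ℕ}
    (hbal : ∀ u v, s u ≤ s v + 1) (v : β) : (∑ u, s u) / Fintype.card β ≤ s v := by
  have : Nonempty β := ⟨v⟩
  refine Nat.lt_succ_iff.mp ((Nat.div_lt_iff_lt_mul Fintype.card_pos).mpr ?_)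
  calc ∑ u, s u < ∑ _u : β, (s v + 1) :=
        sum_lt_sum (fun u _ => hbal u v) ⟨v, mem_univ v, Nat.lt_succ_self _⟩
    _ = (s v + 1) * Fintype.card β := by simp [mul_comm]

lemma card_filter_pi_eq_eq_mul_le {β : Type*} [Fintype β] [DecidableEq β] {σ : β → Type*}
    [∀ v, Fintype (σ v)] [∀ v, DecidableEq (σ v)] {u v : β} (huv : u ≠ v) (i : σ u) (j : σ v) :
    #{t : ∀ w, σ w | t u = i ∧ t v = j} * (Fintype.card (σ u) * Fintype.card (σ v)) ≤
      Fintype.card (∀ w, σ w) := by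
  set S : Finset (∀ w, σ w) := {t | t u = i ∧ t v = j}
  have hinj : Function.Injective fun p : S × σ u × σ v =>
      Function.update (Function.update (p.1 : ∀ w, σ w) u p.2.1) v p.2.2 := by
    rintro ⟨⟨t, ht⟩, x, y⟩ ⟨⟨t', ht'⟩, x', y'⟩ h
    simp only [S, mem_filter, mem_univ, true_and] at ht ht' h
    have hy : y = y' := by simpa using congrFun h v
    have hx : x = x' := by simpa [Function.update_of_ne huv] using congrFun h u
    have htt' : t = t' := by
      funext w
      by_cases hwu : w = u
      · subst hwu; rw [ht.1, ht'.1]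
      by_cases hwv : w = v
      · subst hwv; rw [ht.2, ht'.2]
      simpa [Function.update_of_ne hwu, Function.update_of_ne hwv] using congrFun h w
    subst hx hy htt'
    rfl
  simpa [mul_assoc] using Fintype.card_le_of_injective _ hinj

namespace Blowup

variable {α β : Type*} {F : SimpleGraph β} {s : β → ℕ} {k : ℕ}

def fst (F : SimpleGraph β) (s : β → ℕ) : Blowup F s →g F where
  toFun x := x.1
  map_rel' h := h

lemma not_copies_of_isEmpty_hom {H : SimpleGraph α} (h : IsEmpty (H →g F)) :
    ¬ Copies H (Blowup F s) :=
  fun ⟨f, _⟩ => h.elim ((fst F s).comp f)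

lemma degree_mul_le_ncard_neighborSet [Fintype β] [DecidableRel F.Adj] {q : ℕ}
    (hq : ∀ v, q ≤ s v) (x : Σ v, Fin (s v)) :
    F.degree x.1 * q ≤ ((Blowup F s).neighborSet x).ncard := by
  have hinj : Function.Injective fun p : F.neighborSet x.1 × Fin q =>
      (⟨⟨p.1, Fin.castLE (hq _) p.2⟩, p.1.2⟩ : (Blowup F s).neighborSet x) := by
    rintro ⟨⟨v, hv⟩, i⟩ ⟨⟨v', hv'⟩, i'⟩ h
    replace h := congrArg Subtype.val h
    simp only [Sigma.mk.inj_iff] at h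
    obtain ⟨rfl, h⟩ := h
    rw [Fin.castLE_injective _ (eq_of_heq h)]
  calc F.degree x.1 * q = Nat.card (F.neighborSet x.1 × Fin q) := by
        rw [Nat.card_eq_fintype_card, Fintype.card_prod, Fintype.card_fin,
          card_neighborSet_eq_degree]
    _ ≤ Nat.card ((Blowup F s).neighborSet x) := Nat.card_le_card_of_injective _ hinj
    _ = ((Blowup F s).neighborSet x).ncard := Nat.card_coe_set_eq _

lemma exists_mem_edgeSet_diff_through_section (hF : ¬ F.Colorable k)
    {G'' : SimpleGraph (Σ v, Fin (s v))} (hcol : G''.Colorable k) (t : ∀ v, Fin (s v)) :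
    ∃ e ∈ (Blowup F s).edgeSet \ G''.edgeSet, ∀ z ∈ e, t z.1 = z.2 := by
  by_contra! h
  refine hF (hcol.of_hom ⟨fun v => ⟨v, t v⟩, fun {u v} huv => ?_⟩)
  by_contra hnadj
  obtain ⟨z, hz, hne⟩ := h s(⟨u, t u⟩, ⟨v, t v⟩) ⟨huv, hnadj⟩
  rcases Sym2.mem_iff.mp hz with rfl | rfl <;> exact hne rfl

theorem sq_le_ncard_edgeSet_diff [Fintype β] (hF : ¬ F.Colorable k) {q : ℕ}
    (hq : ∀ v, q ≤ s v) {G'' : SimpleGraph (Σ v, Fin (s v))} (hcol : G''.Colorable k) :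
    q ^ 2 ≤ ((Blowup F s).edgeSet \ G''.edgeSet).ncard := by
  classical
  rcases Nat.eq_zero_or_pos q with rfl | hq0
  · simp
  set N := Fintype.card (∀ v, Fin (s v))
  set D := ((Blowup F s).edgeSet \ G''.edgeSet).toFinset
  let through (e : Sym2 (Σ v, Fin (s v))) : Finset (∀ v, Fin (s v)) := {t | ∀ z ∈ e, t z.1 = z.2}
  have hcover : (univ : Finset (∀ v, Fin (s v))) ⊆ D.biUnion through := fun t _ => by
    obtain ⟨e, he, ht⟩ := exists_mem_edgeSet_diff_through_section hF hcol t
    exact mem_biUnion.mpr ⟨e, Set.mem_toFinset.mpr he, mem_filter.mpr ⟨mem_univ t, ht⟩⟩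
  have hthrough : ∀ e ∈ D, #(through e) * q ^ 2 ≤ N := by
    intro e he
    induction e using Sym2.ind with | _ x y => ?_
    have hxy : x.1 ≠ y.1 := F.ne_of_adj (Set.mem_toFinset.mp he).1
    calc #(through s(x, y)) * q ^ 2
        ≤ #{t : ∀ v, Fin (s v) | t x.1 = x.2 ∧ t y.1 = y.2} * (s x.1 * s y.1) := by
          simp only [through, Sym2.mem_iff, forall_eq_or_imp, forall_eq, sq]
          gcongr <;> apply hq
      _ ≤ N := by
          simpa [N] using card_filter_pi_eq_eq_mul_le (σ := fun v => Fin (s v)) hxy x.2 y.2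
  have hN : 0 < N := Fintype.card_pos_iff.mpr ⟨fun v => ⟨0, hq0.trans_le (hq v)⟩⟩
  rw [Set.ncard_eq_toFinset_card']
  refine le_of_mul_le_mul_right ?_ hN
  calc q ^ 2 * N = #(univ : Finset (∀ v, Fin (s v))) * q ^ 2 := by rw [card_univ, mul_comm]
    _ ≤ (∑ e ∈ D, #(through e)) * q ^ 2 := by
        gcongr; exact (card_le_card hcover).trans card_biUnion_le
    _ ≤ ∑ _e ∈ D, N := by rw [sum_mul]; exact sum_le_sum hthrough
    _ = #D * N := by rw [sum_const, smul_eq_mul]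

end Blowup

theorem statement9_general {α β : Type*} [Fintype β]
    (k : ℕ) (H : SimpleGraph α) (G : SimpleGraph β) [DecidableRel G.Adj]
    (hG : ¬ G.Colorable k) (hhom : IsEmpty (H →g G))
    (n : ℕ) (s : β → ℕ) (hsum : ∑ v, s v = n)
    (hbal : ∀ u v : β, s u ≤ s v + 1) :
    ¬ Copies H (Blowup G s) ∧
      (∀ x : Σ v : β, Fin (s v),
        G.minDegree * (n / Fintype.card β) ≤ ((Blowup G s).neighborSet x).ncard) ∧
      ∀ G'' : SimpleGraph (Σ v : β, Fin (s v)), G'' ≤ Blowup G s →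
        ((Blowup G s).edgeSet \ G''.edgeSet).ncard < (n / Fintype.card β) ^ 2 →
        ¬ G''.Colorable k := by
  have hq : ∀ v, n / Fintype.card β ≤ s v := hsum ▸ sum_div_card_le_of_balanced hbal
  refine ⟨Blowup.not_copies_of_isEmpty_hom hhom, fun x => ?_, fun G'' _ hdel hcol => ?_⟩
  · exact (Nat.mul_le_mul_right _ (G.minDegree_le_degree x.1)).trans
      (Blowup.degree_mul_le_ncard_neighborSet hq x)
  · exact hdel.not_ge (Blowup.sq_le_ncard_edgeSet_diff hG hq hcol)

/-- If `G` is not `k`-colourable and `H` is not homomorphic to `G`, then a balanced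
blow-up `G'` of `G` on `n ≥ m = |G|` vertices is `H`-free, has minimum degree at least
`δ(G) * ⌊n/m⌋`, and cannot be made `k`-colourable by deleting fewer than `⌊n/m⌋ ^ 2`
edges. -/
theorem statement9 {α β : Type*} [Fintype α] [Fintype β]
    (k : ℕ) (hk : 0 < k) (H : SimpleGraph α) (G : SimpleGraph β) [DecidableRel G.Adj]
    (hG : ¬ G.Colorable k) (hhom : IsEmpty (H →g G))
    (n : ℕ) (hn : Fintype.card β ≤ n)
    (s : β → ℕ) (hpos : ∀ v, 1 ≤ s v) (hsum : ∑ v, s v = n)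
    (hbal : ∀ u v : β, s u ≤ s v + 1) :
    ¬ Copies H (Blowup G s) ∧
      (∀ x : Σ v : β, Fin (s v),
        G.minDegree * (n / Fintype.card β) ≤ ((Blowup G s).neighborSet x).ncard) ∧
      ∀ G'' : SimpleGraph (Σ v : β, Fin (s v)), G'' ≤ Blowup G s →
        ((Blowup G s).edgeSet \ G''.edgeSet).ncard < (n / Fintype.card β) ^ 2 →
        ¬ G''.Colorable k :=
  statement9_general k H G hG hhom n s hsum hbal
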